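/- Let m, j be positive integers with m ≥ 5 and 1 ≤ j < m/2. If 3 divides m and 3 does not divide j, then the generalized Petersen graph G(m, j) admits a neighborhood 3-balanced coloring; in fact the coloring ℓ(v_i) = ℓ(u_i) = i mod 3 is such a coloring. -/

import Mathlib

/-- A coloring `ℓ : V → ZMod 3` of a simple graph `G` is neighborhood 3-balanced if
every vertex has an equal number of neighbors of each of the three colors. -/
def NBalanced {V : Type*} (G : SimpleGraph V) (ℓ : V → ZMod 3) : Prop :=
  ∀ v : V, ∀ i j : ZMod 3,
    {w | G.Adj v w ∧ ℓ w = i}.ncard = {w | G.Adj v w ∧ ℓ w = j}.ncard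

/-- The generalized Petersen graph `G(m, j)`.  Vertices: `Sum.inl x` are the exterior
vertices `v_x` and `Sum.inr x` are the interior vertices `u_x`, for `x : ZMod m`.
Edges: `v_i v_{i+1}`, `v_i u_i`, and `u_i u_{i+j}`. -/
def genPetersen (m j : ℕ) : SimpleGraph (ZMod m ⊕ ZMod m) :=
  SimpleGraph.fromRel (fun a b =>
    match a, b with
    | Sum.inl x, Sum.inl y => y = x + 1
    | Sum.inl x, Sum.inr y => y = x
    | Sum.inr x, Sum.inr y => y = x + (j : ZMod m)
    | _, _ => False)

/-! Every vertex of `G(m, j)` has exactly three neighbours, one of each color, once the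
coloring is induced by an additive map `f : ZMod m → ZMod 3` with `f 1 ≠ 0` and `f j ≠ 0`:
the neighbours `v_{i±1}, u_i` of `v_i` get the colors `f i ± f 1, f i`, and the neighbours
`u_{i±j}, v_i` of `u_i` get `f i ± f j, f i`, which are the three residues mod 3. For
`3 ∣ m` the reduction `ZMod m → ZMod 3` is such a map, and `3 ∤ j` gives `f j ≠ 0`. -/

lemma ZMod.three_add_sub_self_pairwise_ne (t d : ZMod 3) (hd : d ≠ 0) :
    t + d ≠ t - d ∧ t + d ≠ t ∧ t - d ≠ t := by
  revert t d; decide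

lemma ZMod.three_eq_or_eq_or_eq (p q r i : ZMod 3) (hpq : p ≠ q) (hpr : p ≠ r) (hqr : q ≠ r) :
    i = p ∨ i = q ∨ i = r := by
  revert p q r i; decide

namespace SimpleGraph

variable {V : Type*} (G : SimpleGraph V) (ℓ : V → ZMod 3)

lemma setOf_adj_color_eq_singleton {v a b c : V}
    (hN : ∀ w, G.Adj v w ↔ w = a ∨ w = b ∨ w = c) (hab : ℓ a ≠ ℓ b) (hac : ℓ a ≠ ℓ c) :
    {w | G.Adj v w ∧ ℓ w = ℓ a} = {a} := by
  ext w
  simp only [Set.mem_ofPred_eq, Set.mem_singleton_iff, hN]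
  constructor
  · rintro ⟨rfl | rfl | rfl, hw⟩
    · rfl
    · exact absurd hw.symm hab
    · exact absurd hw.symm hac
  · rintro rfl
    exact ⟨Or.inl rfl, rfl⟩

lemma ncard_setOf_adj_color_eq_one {v a b c : V}
    (hN : ∀ w, G.Adj v w ↔ w = a ∨ w = b ∨ w = c)
    (hab : ℓ a ≠ ℓ b) (hac : ℓ a ≠ ℓ c) (hbc : ℓ b ≠ ℓ c) (i : ZMod 3) :
    {w | G.Adj v w ∧ ℓ w = i}.ncard = 1 := by
  rcases ZMod.three_eq_or_eq_or_eq _ _ _ i hab hac hbc with rfl | rfl | rfl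
  · rw [G.setOf_adj_color_eq_singleton ℓ hN hab hac, Set.ncard_singleton]
  · rw [G.setOf_adj_color_eq_singleton ℓ (v := v) (b := a) (c := c)
      (fun w => (hN w).trans (by tauto)) hab.symm hbc, Set.ncard_singleton]
  · rw [G.setOf_adj_color_eq_singleton ℓ (v := v) (b := a) (c := b)
      (fun w => (hN w).trans (by tauto)) hac.symm hbc.symm, Set.ncard_singleton]

lemma ncard_setOf_adj_color_eq_one_of_add_sub_self {v a b c : V}
    (hN : ∀ w, G.Adj v w ↔ w = a ∨ w = b ∨ w = c) {t d : ZMod 3} (hd : d ≠ 0)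
    (ha : ℓ a = t + d) (hb : ℓ b = t - d) (hc : ℓ c = t) (i : ZMod 3) :
    {w | G.Adj v w ∧ ℓ w = i}.ncard = 1 := by
  obtain ⟨hab, hac, hbc⟩ := ZMod.three_add_sub_self_pairwise_ne t d hd
  exact G.ncard_setOf_adj_color_eq_one ℓ hN (ha ▸ hb ▸ hab) (ha ▸ hc ▸ hac) (hb ▸ hc ▸ hbc) i

lemma nbalanced_of_ncard_eq_one (h : ∀ v i, {w | G.Adj v w ∧ ℓ w = i}.ncard = 1) :
    NBalanced G ℓ := fun v i i' => by rw [h v i, h v i']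

end SimpleGraph

section genPetersen

variable {m : ℕ} (j : ℕ)

lemma genPetersen_adj_inl_iff (h1 : (1 : ZMod m) ≠ 0) (x : ZMod m) (w : ZMod m ⊕ ZMod m) :
    (genPetersen m j).Adj (Sum.inl x) w ↔
      w = Sum.inl (x + 1) ∨ w = Sum.inl (x - 1) ∨ w = Sum.inr x := by
  rw [genPetersen, SimpleGraph.fromRel_adj]
  cases w with
  | inl y =>
    simp only [ne_eq, Sum.inl.injEq, reduceCtorEq, or_false]
    constructor
    · rintro ⟨-, h | h⟩
      · exact Or.inl h
      · exact Or.inr (by rw [h]; ring)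
    · rintro (rfl | rfl)
      · exact ⟨fun h => h1 (by linear_combination -h), Or.inl rfl⟩
      · exact ⟨fun h => h1 (by linear_combination h), Or.inr (by ring)⟩
  | inr y => simp

lemma genPetersen_adj_inr_iff (hj : (j : ZMod m) ≠ 0) (x : ZMod m) (w : ZMod m ⊕ ZMod m) :
    (genPetersen m j).Adj (Sum.inr x) w ↔
      w = Sum.inr (x + j) ∨ w = Sum.inr (x - j) ∨ w = Sum.inl x := by
  rw [genPetersen, SimpleGraph.fromRel_adj]
  cases w with
  | inr y =>
    simp only [ne_eq, Sum.inr.injEq, reduceCtorEq, or_false]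
    constructor
    · rintro ⟨-, h | h⟩
      · exact Or.inl h
      · exact Or.inr (by rw [h]; ring)
    · rintro (rfl | rfl)
      · exact ⟨fun h => hj (by linear_combination -h), Or.inl rfl⟩
      · exact ⟨fun h => hj (by linear_combination h), Or.inr (by ring)⟩
  | inl y => simp [eq_comm]

theorem nbalanced_genPetersen_sumElim (f : ZMod m →+ ZMod 3) (h1 : f 1 ≠ 0) (hj : f j ≠ 0) :
    NBalanced (genPetersen m j) (Sum.elim f f) := by
  refine SimpleGraph.nbalanced_of_ncard_eq_one _ _ fun v => ?_
  cases v with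
  | inl x =>
    exact SimpleGraph.ncard_setOf_adj_color_eq_one_of_add_sub_self _ _
      (genPetersen_adj_inl_iff j (fun h => h1 (by rw [h, map_zero])) x) h1
      (map_add f x 1) (map_sub f x 1) rfl
  | inr x =>
    exact SimpleGraph.ncard_setOf_adj_color_eq_one_of_add_sub_self _ _
      (genPetersen_adj_inr_iff j (fun h => hj (by rw [h, map_zero])) x) hj
      (map_add f x j) (map_sub f x j) rfl

end genPetersen

theorem stmt6 (m j : ℕ) (hm : 5 ≤ m)
    (h3m : 3 ∣ m) (h3j : ¬ 3 ∣ j) :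
    (∃ ℓ, NBalanced (genPetersen m j) ℓ) ∧
      NBalanced (genPetersen m j)
        (fun a => match a with
          | Sum.inl x => (x.val : ZMod 3)
          | Sum.inr x => (x.val : ZMod 3)) := by
  have : NeZero m := ⟨by omega⟩
  set f : ZMod m →+ ZMod 3 := (ZMod.castHom h3m (ZMod 3)).toAddMonoidHom
  have hℓ : (fun a => match a with
      | Sum.inl x => (x.val : ZMod 3)
      | Sum.inr x => (x.val : ZMod 3)) = Sum.elim f f := by
    funext a
    cases a <;> simp [f, ZMod.natCast_val]
  have hf1 : f 1 ≠ 0 := by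
    change ZMod.castHom h3m (ZMod 3) 1 ≠ 0
    rw [map_one]
    decide
  have hfj : f j ≠ 0 := by
    change ZMod.castHom h3m (ZMod 3) j ≠ 0
    rwa [map_natCast, Ne, ZMod.natCast_eq_zero_iff]
  rw [hℓ]
  exact ⟨⟨_, nbalanced_genPetersen_sumElim j f hf1 hfj⟩,
    nbalanced_genPetersen_sumElim j f hf1 hfj⟩
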